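/- Let G be a topological group, let K, P, L be affine G-flows, let φ: K → P be an affine G-irreducible extension, and let ψ: P → L be a proximally irreducible extension. Then ψ ∘ φ: K → L is a proximally irreducible extension. -/

import Mathlib

/-! An affine-irreducible `φ : K → P` sends `cl (ext K)` into `cl (ext P)`: the points of `K`
lying over `cl (ext P)` form a closed invariant set whose closed convex hull maps onto `P`, so by
irreducibility this hull is `K`, and Milman's theorem puts `ext K` inside the set. Hence if a
subflow `C` of `K` meets every `conv (cl (ext K) ∩ (ψ ∘ φ)⁻¹ y)`, its image `φ C` meets every
`conv (cl (ext P) ∩ ψ⁻¹ y)`, so `φ C = P` by proximal irreducibility of `ψ`, and then `C = K` by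
irreducibility of `φ`. -/

universe u v w x

/-- An affine `G`-flow: a nonempty compact convex subset of a Hausdorff locally convex
real topological vector space, equipped with a continuous action of `G` by affine
homeomorphisms.  The action is recorded as a function `smul : G → E → E` on the ambient
space whose behaviour is only constrained on `carrier`. -/
structure AffineFlow (G : Type u) [Group G] [TopologicalSpace G] [IsTopologicalGroup G] where
  /-- the ambient locally convex topological real vector space -/
  E : Type v
  [instAddCommGroup : AddCommGroup E]
  [instModule : Module ℝ E]
  [instTopologicalSpace : TopologicalSpace E]
  [instT2Space : T2Space E]
  [instTopologicalAddGroup : IsTopologicalAddGroup E]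
  [instContinuousSMul : ContinuousSMul ℝ E]
  [instLocallyConvexSpace : LocallyConvexSpace ℝ E]
  /-- the compact convex set itself -/
  carrier : Set E
  nonempty' : carrier.Nonempty
  isCompact' : IsCompact carrier
  convex' : Convex ℝ carrier
  /-- the action of `G` -/
  smul : G → E → E
  smul_mem' : ∀ g : G, ∀ x ∈ carrier, smul g x ∈ carrier
  one_smul' : ∀ x ∈ carrier, smul 1 x = x
  mul_smul' : ∀ g h : G, ∀ x ∈ carrier, smul (g * h) x = smul g (smul h x)
  continuousOn_smul' : ContinuousOn (fun p : G × E => smul p.1 p.2) (Set.univ ×ˢ carrier)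
  smul_affine' : ∀ g : G, ∀ x ∈ carrier, ∀ y ∈ carrier, ∀ t : ℝ, 0 ≤ t → t ≤ 1 →
    smul g (t • x + (1 - t) • y) = t • smul g x + (1 - t) • smul g y

attribute [instance] AffineFlow.instAddCommGroup AffineFlow.instModule
  AffineFlow.instTopologicalSpace AffineFlow.instT2Space AffineFlow.instTopologicalAddGroup
  AffineFlow.instContinuousSMul AffineFlow.instLocallyConvexSpace

/-- An affine `G`-map between affine `G`-flows: a continuous affine `G`-equivariant map
(recorded on the ambient spaces, with all conditions on the carriers). -/
def IsAffineGMap {G : Type u} [Group G] [TopologicalSpace G] [IsTopologicalGroup G]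
    (K : AffineFlow.{u, v} G) (L : AffineFlow.{u, w} G) (f : K.E → L.E) : Prop :=
  Set.MapsTo f K.carrier L.carrier ∧ ContinuousOn f K.carrier ∧
    (∀ g : G, ∀ x ∈ K.carrier, f (K.smul g x) = L.smul g (f x)) ∧
    ∀ x ∈ K.carrier, ∀ y ∈ K.carrier, ∀ t : ℝ, 0 ≤ t → t ≤ 1 →
      f (t • x + (1 - t) • y) = t • f x + (1 - t) • f y

/-- An affine extension: a surjective affine `G`-map. -/
def IsAffineExtension {G : Type u} [Group G] [TopologicalSpace G] [IsTopologicalGroup G]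
    (K : AffineFlow.{u, v} G) (L : AffineFlow.{u, w} G) (f : K.E → L.E) : Prop :=
  IsAffineGMap K L f ∧ f '' K.carrier = L.carrier

/-- An affine subflow: a nonempty closed convex `G`-invariant subset. -/
def AffineFlow.IsAffineSubflow {G : Type u} [Group G] [TopologicalSpace G] [IsTopologicalGroup G]
    (K : AffineFlow.{u, v} G) (C : Set K.E) : Prop :=
  C.Nonempty ∧ C ⊆ K.carrier ∧ IsClosed C ∧ Convex ℝ C ∧ ∀ g : G, ∀ x ∈ C, K.smul g x ∈ C

/-- An affine extension `f : K → L` is affine `G`-irreducible if no proper affine subflow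
of `K` maps onto `L`. -/
def IsAffineIrreducibleExt {G : Type u} [Group G] [TopologicalSpace G] [IsTopologicalGroup G]
    (K : AffineFlow.{u, v} G) (L : AffineFlow.{u, w} G) (f : K.E → L.E) : Prop :=
  IsAffineExtension K L f ∧
    ∀ C : Set K.E, K.IsAffineSubflow C → C ≠ K.carrier → f '' C ≠ L.carrier

/-- An affine extension `f : K → L` is proximally irreducible if the only affine subflow
`C` of `K` meeting `conv (cl (ext K) ∩ f ⁻¹' {y})` for every `y ∈ cl (ext L)` is `K` itself. -/
def IsProximallyIrreducibleExt {G : Type u} [Group G] [TopologicalSpace G] [IsTopologicalGroup G]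
    (K : AffineFlow.{u, v} G) (L : AffineFlow.{u, w} G) (f : K.E → L.E) : Prop :=
  IsAffineExtension K L f ∧
    ∀ C : Set K.E, K.IsAffineSubflow C →
      (∀ y ∈ closure (L.carrier.extremePoints ℝ),
        (C ∩ convexHull ℝ (closure (K.carrier.extremePoints ℝ) ∩ f ⁻¹' {y})).Nonempty) →
      C = K.carrier

/-- An affine `G`-flow `K` is affine `G`-projective if for all affine `G`-flows `L`, `P`,
every affine `G`-map `φ : K → L` and every affine extension `π : P → L`, there is an
affine `G`-map `ψ : K → P` with `π ∘ ψ = φ` (on the carrier of `K`). -/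
def IsAffineGProjective {G : Type u} [Group G] [TopologicalSpace G] [IsTopologicalGroup G]
    (K : AffineFlow.{u, v} G) : Prop :=
  ∀ (L : AffineFlow.{u, w} G) (P : AffineFlow.{u, x} G) (φ : K.E → L.E) (π : P.E → L.E),
    IsAffineGMap K L φ → IsAffineExtension P L π →
    ∃ ψ : K.E → P.E, IsAffineGMap K P ψ ∧ ∀ y ∈ K.carrier, π (ψ y) = φ y

open Set Topology Pointwise

section ConvexAnalysis

variable {E : Type*} [AddCommGroup E] [Module ℝ E] [TopologicalSpace E]
  [IsTopologicalAddGroup E] [ContinuousSMul ℝ E]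

theorem IsCompact.convexJoin {s t : Set E} (hs : IsCompact s) (ht : IsCompact t) :
    IsCompact (_root_.convexJoin ℝ s t) := by
  have himage : _root_.convexJoin ℝ s t =
      (fun q : ℝ × E × E => q.1 • q.2.1 + (1 - q.1) • q.2.2) '' (Icc 0 1 ×ˢ s ×ˢ t) := by
    ext z
    simp only [mem_convexJoin, segment, mem_image, mem_prod, mem_Icc, Prod.exists]
    constructor
    · rintro ⟨a, ha, b, hb, u, v, hu, hv, huv, rfl⟩
      exact ⟨u, a, b, ⟨⟨hu, by linarith⟩, ha, hb⟩, by rw [← huv, add_sub_cancel_left]⟩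
    · rintro ⟨u, a, b, ⟨⟨hu0, hu1⟩, ha, hb⟩, rfl⟩
      exact ⟨a, ha, b, hb, u, 1 - u, hu0, by linarith, by ring, rfl⟩
  rw [himage]
  exact (isCompact_Icc.prod (hs.prod ht)).image (by fun_prop)

theorem isCompact_convexHull_biUnion {ι : Type*} (I : Finset ι) {K : ι → Set E}
    (hconv : ∀ i, Convex ℝ (K i)) (hcomp : ∀ i, IsCompact (K i)) :
    IsCompact (convexHull ℝ (⋃ i ∈ I, K i)) := by
  classical
  induction I using Finset.induction_on with
  | empty => simp
  | insert a I _ ih =>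
    rw [Finset.set_biUnion_insert]
    rcases (K a).eq_empty_or_nonempty with ha | ha
    · rwa [ha, empty_union]
    rcases (⋃ i ∈ I, K i).eq_empty_or_nonempty with hI | hI
    · rw [hI, union_empty, (hconv a).convexHull_eq]
      exact hcomp a
    rw [convexHull_union ha hI, (hconv a).convexHull_eq]
    exact (hcomp a).convexJoin ih

/-- Milman's converse to the Krein–Milman theorem. If `x ∉ t`, cut the closed convex hull `M`
of `t` into finitely many compact convex pieces `M ∩ (p +ᵥ V)` covering `t`, with `V` a closed
convex neighbourhood of `0` so small that no piece contains `x`; the pieces have compact convex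
hull `M`, so the extreme point `x` lies in one of them. -/
theorem extremePoints_closure_convexHull_subset [T2Space E] [LocallyConvexSpace ℝ E] {t : Set E}
    (ht : IsCompact t) (hM : IsCompact (closure (convexHull ℝ t))) :
    (closure (convexHull ℝ t)).extremePoints ℝ ⊆ t := by
  set M := closure (convexHull ℝ t)
  have hMconv : Convex ℝ M := (convex_convexHull ℝ t).closure
  intro x hx
  by_contra hxt
  have hfar : ((fun q => -q + x) '' t)ᶜ ∈ 𝓝 (0 : E) := by
    refine (ht.image (by fun_prop)).isClosed.isOpen_compl.mem_nhds ?_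
    rintro ⟨q, hq, hq0⟩
    exact hxt (neg_add_eq_zero.1 hq0 ▸ hq)
  obtain ⟨V, ⟨hV0, hVclosed, -, hVconv⟩, hVfar⟩ :=
    (nhds_hasBasis_absConvex_closed ℝ E).mem_iff.1 hfar
  obtain ⟨I, hIt, hcover⟩ :=
    ht.elim_nhds_subcover (fun p => p +ᵥ V) fun p _ => vadd_mem_nhds_self.2 hV0
  set piece : E → Set E := fun p => M ∩ (p +ᵥ V)
  have hpieces : IsCompact (convexHull ℝ (⋃ p ∈ I, piece p)) :=
    isCompact_convexHull_biUnion I (fun p => hMconv.inter (hVconv.vadd p))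
      fun p => hM.inter_right (hVclosed.vadd p)
  have ht_pieces : t ⊆ ⋃ p ∈ I, piece p := fun y hy => by
    obtain ⟨p, hpI, hyp⟩ := mem_iUnion₂.1 (hcover hy)
    exact mem_iUnion₂.2 ⟨p, hpI, subset_closure (subset_convexHull ℝ t hy), hyp⟩
  have hM_eq : M = convexHull ℝ (⋃ p ∈ I, piece p) :=
    (closure_minimal (convexHull_min (ht_pieces.trans (subset_convexHull ℝ _))
      (convex_convexHull ℝ _)) hpieces.isClosed).antisymm
      (convexHull_min (iUnion₂_subset fun p _ => inter_subset_left) hMconv)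
  rw [hM_eq] at hx
  obtain ⟨p, hpI, -, hxp⟩ := mem_iUnion₂.1 (extremePoints_convexHull_subset hx)
  exact hVfar (mem_vadd_set_iff_neg_vadd_mem.1 hxp) ⟨p, hIt p hpI, rfl⟩

end ConvexAnalysis

section AffineOn

variable {E F H : Type*} [AddCommGroup E] [Module ℝ E] [AddCommGroup F] [Module ℝ F]
  [AddCommGroup H] [Module ℝ H]

/-- Affinity along segments, in the exact form of the fields of `AffineFlow` and `IsAffineGMap`. -/
def AffineOn (f : E → F) (s : Set E) : Prop :=
  ∀ x ∈ s, ∀ y ∈ s, ∀ t : ℝ, 0 ≤ t → t ≤ 1 → f (t • x + (1 - t) • y) = t • f x + (1 - t) • f y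

variable {f : E → F} {s A : Set E}

theorem AffineOn.mono {t : Set E} (hf : AffineOn f s) (hts : t ⊆ s) : AffineOn f t :=
  fun x hx y hy => hf x (hts hx) y (hts hy)

theorem AffineOn.comp {g : F → H} {t : Set F} (hg : AffineOn g t) (hf : AffineOn f s)
    (hst : MapsTo f s t) : AffineOn (g ∘ f) s := fun x hx y hy a ha0 ha1 => by
  simp only [Function.comp_apply, hf x hx y hy a ha0 ha1, hg _ (hst hx) _ (hst hy) a ha0 ha1]

theorem AffineOn.convex_inter_preimage (hf : AffineOn f s) (hs : Convex ℝ s) {C : Set F}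
    (hC : Convex ℝ C) : Convex ℝ (s ∩ f ⁻¹' C) := by
  rintro x ⟨hx, hfx⟩ y ⟨hy, hfy⟩ a b ha hb hab
  obtain rfl : b = 1 - a := by linarith
  refine ⟨hs hx hy ha hb hab, ?_⟩
  rw [mem_preimage, hf x hx y hy a ha (by linarith)]
  exact hC hfx hfy ha hb hab

theorem AffineOn.convex_image (hf : AffineOn f s) (hs : Convex ℝ s) : Convex ℝ (f '' s) := by
  rintro _ ⟨x, hx, rfl⟩ _ ⟨y, hy, rfl⟩ a b ha hb hab
  obtain rfl : b = 1 - a := by linarith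
  exact ⟨_, hs hx hy ha hb hab, hf x hx y hy a ha (by linarith)⟩

theorem AffineOn.image_convexHull_subset (hf : AffineOn f s) (hs : Convex ℝ s) (hA : A ⊆ s) :
    f '' convexHull ℝ A ⊆ convexHull ℝ (f '' A) := by
  have hsub : convexHull ℝ A ⊆ convexHull ℝ A ∩ f ⁻¹' convexHull ℝ (f '' A) :=
    convexHull_min (fun x hx => ⟨subset_convexHull ℝ A hx, subset_convexHull ℝ _ ⟨x, hx, rfl⟩⟩)
      ((hf.mono (convexHull_min hA hs)).convex_inter_preimage (convex_convexHull ℝ A)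
        (convex_convexHull ℝ _))
  exact image_subset_iff.2 fun x hx => (hsub hx).2

end AffineOn

theorem ContinuousOn.mapsTo_closure {X Y : Type*} [TopologicalSpace X] [TopologicalSpace Y]
    {f : X → Y} {s : Set X} {t : Set Y} (hf : ContinuousOn f (closure s)) (h : MapsTo f s t) :
    MapsTo f (closure s) (closure t) :=
  fun _ hx => closure_mono (image_subset_iff.2 h) (hf.image_closure ⟨_, hx, rfl⟩)

namespace AffineFlow

variable {G : Type u} [Group G] [TopologicalSpace G] [IsTopologicalGroup G]
  (K : AffineFlow.{u, v} G)

theorem affineOn_smul (g : G) : AffineOn (K.smul g) K.carrier := K.smul_affine' g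

theorem continuousOn_smul (g : G) : ContinuousOn (K.smul g) K.carrier :=
  K.continuousOn_smul'.comp (continuous_const.prodMk continuous_id).continuousOn
    fun _ hx => ⟨mem_univ g, hx⟩

theorem smul_inv_smul (g : G) {x : K.E} (hx : x ∈ K.carrier) : K.smul g (K.smul g⁻¹ x) = x := by
  rw [← K.mul_smul' _ _ x hx, mul_inv_cancel, K.one_smul' x hx]

theorem inv_smul_smul (g : G) {x : K.E} (hx : x ∈ K.carrier) : K.smul g⁻¹ (K.smul g x) = x := by
  rw [← K.mul_smul' _ _ x hx, inv_mul_cancel, K.one_smul' x hx]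

theorem smul_mem_extremePoints (g : G) {x : K.E} (hx : x ∈ K.carrier.extremePoints ℝ) :
    K.smul g x ∈ K.carrier.extremePoints ℝ := by
  refine ⟨K.smul_mem' g x hx.1, fun y₁ hy₁ y₂ hy₂ ⟨a, b, ha, hb, hab, hxy⟩ => ?_⟩
  obtain rfl : b = 1 - a := by linarith
  have hx' : a • K.smul g⁻¹ y₁ + (1 - a) • K.smul g⁻¹ y₂ = x := by
    rw [← K.affineOn_smul g⁻¹ y₁ hy₁ y₂ hy₂ a ha.le (by linarith), hxy,
      K.inv_smul_smul g hx.1]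
  rw [← hx.2 (K.smul_mem' g⁻¹ y₁ hy₁) (K.smul_mem' g⁻¹ y₂ hy₂) ⟨a, 1 - a, ha, hb, hab, hx'⟩,
    K.smul_inv_smul g hy₁]

theorem closure_subset_carrier {S : Set K.E} (hS : S ⊆ K.carrier) : closure S ⊆ K.carrier :=
  closure_minimal hS K.isCompact'.isClosed

theorem mapsTo_smul_closure {S : Set K.E} (hS : S ⊆ K.carrier) {g : G}
    (h : MapsTo (K.smul g) S S) : MapsTo (K.smul g) (closure S) (closure S) :=
  ((K.continuousOn_smul g).mono (K.closure_subset_carrier hS)).mapsTo_closure h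

theorem mapsTo_smul_convexHull {S : Set K.E} (hS : S ⊆ K.carrier) {g : G}
    (h : MapsTo (K.smul g) S S) : MapsTo (K.smul g) (convexHull ℝ S) (convexHull ℝ S) :=
  fun _ hx => convexHull_mono (image_subset_iff.2 h)
    ((K.affineOn_smul g).image_convexHull_subset K.convex' hS ⟨_, hx, rfl⟩)

theorem isAffineSubflow_closure_convexHull {S : Set K.E} (hS : S ⊆ K.carrier) (hne : S.Nonempty)
    (hinv : ∀ g : G, MapsTo (K.smul g) S S) : K.IsAffineSubflow (closure (convexHull ℝ S)) :=
  ⟨hne.convexHull.closure, K.closure_subset_carrier (convexHull_min hS K.convex'),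
    isClosed_closure, (convex_convexHull ℝ S).closure,
    fun g => K.mapsTo_smul_closure (convexHull_min hS K.convex')
      (K.mapsTo_smul_convexHull hS (hinv g))⟩

theorem mapsTo_smul_closure_extremePoints (g : G) :
    MapsTo (K.smul g) (closure (K.carrier.extremePoints ℝ)) (closure (K.carrier.extremePoints ℝ)) :=
  K.mapsTo_smul_closure (fun _ hx => hx.1) fun _ => K.smul_mem_extremePoints g

end AffineFlow

section Extensions

variable {G : Type u} [Group G] [TopologicalSpace G] [IsTopologicalGroup G]
  {K : AffineFlow.{u, v} G} {P : AffineFlow.{u, w} G} {L : AffineFlow.{u, x} G}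
  {φ : K.E → P.E} {ψ : P.E → L.E}

theorem IsAffineGMap.affineOn (hφ : IsAffineGMap K P φ) : AffineOn φ K.carrier := hφ.2.2.2

theorem IsAffineGMap.comp (hψ : IsAffineGMap P L ψ) (hφ : IsAffineGMap K P φ) :
    IsAffineGMap K L (ψ ∘ φ) :=
  ⟨hψ.1.comp hφ.1, hψ.2.1.comp hφ.2.1 hφ.1,
    fun g x hx => by simp only [Function.comp_apply, hφ.2.2.1 g x hx, hψ.2.2.1 g _ (hφ.1 hx)],
    hψ.affineOn.comp hφ.affineOn hφ.1⟩

theorem IsAffineExtension.comp (hψ : IsAffineExtension P L ψ) (hφ : IsAffineExtension K P φ) :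
    IsAffineExtension K L (ψ ∘ φ) :=
  ⟨hψ.1.comp hφ.1, by rw [image_comp, hφ.2, hψ.2]⟩

theorem IsAffineGMap.isAffineSubflow_image (hφ : IsAffineGMap K P φ) {C : Set K.E}
    (hC : K.IsAffineSubflow C) : P.IsAffineSubflow (φ '' C) := by
  obtain ⟨hne, hCK, hclosed, hconv, hinv⟩ := hC
  refine ⟨hne.image φ, image_subset_iff.2 fun x hx => hφ.1 (hCK hx),
    ((K.isCompact'.of_isClosed_subset hclosed hCK).image_of_continuousOn
      (hφ.2.1.mono hCK)).isClosed,
    (hφ.affineOn.mono hCK).convex_image hconv, ?_⟩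
  rintro g _ ⟨x, hx, rfl⟩
  exact ⟨K.smul g x, hinv g x hx, hφ.2.2.1 g x (hCK hx)⟩

theorem IsAffineIrreducibleExt.eq_carrier_of_extremePoints_subset_image
    (hφ : IsAffineIrreducibleExt K P φ) {C : Set K.E} (hC : K.IsAffineSubflow C)
    (hext : P.carrier.extremePoints ℝ ⊆ φ '' C) : C = K.carrier := by
  by_contra hne
  refine hφ.2 C hC hne (subset_antisymm (hφ.1.1.isAffineSubflow_image hC).2.1 ?_)
  obtain ⟨-, -, himage_closed, himage_conv, -⟩ := hφ.1.1.isAffineSubflow_image hC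
  rw [← closure_convexHull_extremePoints P.isCompact' P.convex']
  exact closure_minimal (convexHull_min hext himage_conv) himage_closed

theorem IsAffineIrreducibleExt.mapsTo_closure_extremePoints (hφ : IsAffineIrreducibleExt K P φ) :
    MapsTo φ (closure (K.carrier.extremePoints ℝ)) (closure (P.carrier.extremePoints ℝ)) := by
  obtain ⟨hmaps, hcont, hequiv, -⟩ := hφ.1.1
  set S := K.carrier ∩ φ ⁻¹' closure (P.carrier.extremePoints ℝ)
  have hSclosed : IsClosed S := hcont.preimage_isClosed_of_isClosed K.isCompact'.isClosed
    isClosed_closure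
  have hlift : P.carrier.extremePoints ℝ ⊆ φ '' S := fun p hp => by
    obtain ⟨x, hx, rfl⟩ := hφ.1.2.symm ▸ hp.1
    exact ⟨x, ⟨hx, subset_closure hp⟩, rfl⟩
  have hSne : S.Nonempty :=
    ((P.isCompact'.extremePoints_nonempty P.nonempty').mono hlift).of_image
  have hSinv : ∀ g : G, MapsTo (K.smul g) S S := fun g x hx =>
    ⟨K.smul_mem' g x hx.1, by
      rw [mem_preimage, hequiv g x hx.1]
      exact P.mapsTo_smul_closure_extremePoints g hx.2⟩
  have hD := K.isAffineSubflow_closure_convexHull inter_subset_left hSne hSinv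
  have hDK : closure (convexHull ℝ S) = K.carrier :=
    hφ.eq_carrier_of_extremePoints_subset_image hD
      (hlift.trans (image_mono ((subset_convexHull ℝ S).trans subset_closure)))
  have hext : K.carrier.extremePoints ℝ ⊆ S := by
    rw [← hDK]
    exact extremePoints_closure_convexHull_subset
      (K.isCompact'.of_isClosed_subset hSclosed inter_subset_left) (hDK ▸ K.isCompact')
  exact fun x hx => (closure_minimal hext hSclosed hx).2

end Extensions

/-- **Statement 12.** The composition of an affine `G`-irreducible extension followed by a
proximally irreducible extension is proximally irreducible. -/
theorem statement12 {G : Type u} [Group G] [TopologicalSpace G] [IsTopologicalGroup G]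
    (K : AffineFlow.{u, v} G) (P : AffineFlow.{u, w} G) (L : AffineFlow.{u, x} G)
    (φ : K.E → P.E) (ψ : P.E → L.E)
    (hφ : IsAffineIrreducibleExt K P φ) (hψ : IsProximallyIrreducibleExt P L ψ) :
    IsProximallyIrreducibleExt K L (ψ ∘ φ) := by
  refine ⟨hψ.1.comp hφ.1, fun C hC hmeet => ?_⟩
  have hmeetP : ∀ y ∈ closure (L.carrier.extremePoints ℝ),
      (φ '' C ∩ convexHull ℝ (closure (P.carrier.extremePoints ℝ) ∩ ψ ⁻¹' {y})).Nonempty := by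
    intro y hy
    obtain ⟨z, hzC, hz⟩ := hmeet y hy
    have hfiber : closure (K.carrier.extremePoints ℝ) ∩ (ψ ∘ φ) ⁻¹' {y} ⊆ K.carrier :=
      inter_subset_left.trans (K.closure_subset_carrier fun _ hx => hx.1)
    refine ⟨φ z, mem_image_of_mem φ hzC, convexHull_mono ?_
      (hφ.1.1.affineOn.image_convexHull_subset K.convex' hfiber (mem_image_of_mem φ hz))⟩
    rintro _ ⟨x, ⟨hx, hxy⟩, rfl⟩
    exact ⟨hφ.mapsTo_closure_extremePoints hx, hxy⟩
  by_contra hne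
  exact hφ.2 C hC hne (hψ.2 _ (hφ.1.1.isAffineSubflow_image hC) hmeetP)
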